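/- The quotient N = R[X,Y]/(F_X, F_Y) is a free R-module with basis the residue classes ξ^ν η^μ of the monomials X^ν Y^μ for 0 ≤ ν < q−1 and 0 ≤ μ < p−1, where ξ, η denote the residue classes of X, Y; in particular N is free of rank (p−1)(q−1) over R. -/

import Mathlib

open MvPolynomial

set_option synthInstance.maxHeartbeats 1000000
set_option maxHeartbeats 1000000

def idxSet (p q : ℕ) : Finset (ℕ × ℕ) :=
  (Finset.range q ×ˢ Finset.range p).filter fun t => t.1 * p + t.2 * q < p * q

/-- `R = K[{A_νμ}]`, the polynomial ring in the indeterminates `A_νμ`, `(ν,μ) ∈ I`. -/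
abbrev coefRing (K : Type) [Field K] (p q : ℕ) := MvPolynomial ↥(idxSet p q) K

/-- `R[X,Y]`, with `X 0 = X` and `X 1 = Y`. -/
abbrev genRing (K : Type) [Field K] (p q : ℕ) := MvPolynomial (Fin 2) (coefRing K p q)

/-- The generic normed Weierstraß polynomial
`F = Y^p − X^q + Σ_{(ν,μ) ∈ I} A_νμ X^ν Y^μ ∈ R[X,Y]` of type `p,q`. -/
noncomputable def genF (K : Type) [Field K] (p q : ℕ) : genRing K p q :=
  X 1 ^ p - X 0 ^ q +
    ∑ i : idxSet p q, C (MvPolynomial.X i) * X 0 ^ (i : ℕ × ℕ).1 * X 1 ^ (i : ℕ × ℕ).2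


namespace Weier
variable {R : Type} [CommRing R]

def w (p q : ℕ) (d : Fin 2 →₀ ℕ) : ℕ := p * d 0 + q * d 1

lemma w_add (p q : ℕ) (d e : Fin 2 →₀ ℕ) : w p q (d + e) = w p q d + w p q e := by
  simp [w, Finsupp.add_apply]; ring

lemma w_tsub_single0 (p q Q1 : ℕ) (d : Fin 2 →₀ ℕ) (h : Q1 ≤ d 0) :
    w p q (d - Finsupp.single 0 Q1) = w p q d - p * Q1 := by
  have h2 := Nat.mul_le_mul_left p h
  simp [w, Finsupp.tsub_apply, Finsupp.single_apply, Nat.mul_sub]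
  omega

lemma w_tsub_single1 (p q P1 : ℕ) (d : Fin 2 →₀ ℕ) (h : P1 ≤ d 1) :
    w p q (d - Finsupp.single 1 P1) = w p q d - q * P1 := by
  have h2 := Nat.mul_le_mul_left q h
  simp [w, Finsupp.tsub_apply, Finsupp.single_apply, Nat.mul_sub]
  omega

noncomputable def nfAux (p q Q1 P1 : ℕ) (G1 G2 : MvPolynomial (Fin 2) R) :
    ℕ → (Fin 2 →₀ ℕ) → ((Fin Q1 × Fin P1) →₀ R)
  | 0, _ => 0
  | (n+1), d =>
    if h : Q1 ≤ d 0 then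
      (AddMonoidAlgebra.coeff G1).sum fun m r => r • nfAux p q Q1 P1 G1 G2 n (d - Finsupp.single 0 Q1 + m)
    else if h' : P1 ≤ d 1 then
      (AddMonoidAlgebra.coeff G2).sum fun m r => r • nfAux p q Q1 P1 G1 G2 n (d - Finsupp.single 1 P1 + m)
    else Finsupp.single (⟨d 0, lt_of_not_ge h⟩, ⟨d 1, lt_of_not_ge h'⟩) 1

variable (p q Q1 P1 : ℕ) (G1 G2 : MvPolynomial (Fin 2) R)
variable (hG1 : ∀ m ∈ G1.support, w p q m < p * Q1)
variable (hG2 : ∀ m ∈ G2.support, w p q m < q * P1)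

include hG1 in
lemma wlt0 {d : Fin 2 →₀ ℕ} (h : Q1 ≤ d 0) {m : Fin 2 →₀ ℕ} (hm : m ∈ G1.support) :
    w p q (d - Finsupp.single 0 Q1 + m) < w p q d := by
  rw [w_add, w_tsub_single0 p q Q1 d h]
  have h1 : p * Q1 ≤ w p q d := le_trans (Nat.mul_le_mul_left p h) (Nat.le_add_right _ _)
  have := hG1 m hm
  omega

include hG2 in
lemma wlt1 {d : Fin 2 →₀ ℕ} (h : P1 ≤ d 1) {m : Fin 2 →₀ ℕ} (hm : m ∈ G2.support) :
    w p q (d - Finsupp.single 1 P1 + m) < w p q d := by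
  rw [w_add, w_tsub_single1 p q P1 d h]
  have h1 : q * P1 ≤ w p q d := le_trans (Nat.mul_le_mul_left q h) (Nat.le_add_left _ _)
  have := hG2 m hm
  omega

include hG1 hG2 in
lemma nfAux_eq : ∀ (n : ℕ) (d : Fin 2 →₀ ℕ) (n' : ℕ), w p q d < n → w p q d < n' →
    nfAux p q Q1 P1 G1 G2 n d = nfAux p q Q1 P1 G1 G2 n' d := by
  intro n
  induction n with
  | zero => intro d n' h; omega
  | succ n ih =>
    intro d n' h h'
    cases n' with
    | zero => omega
    | succ n' =>
      simp only [nfAux]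
      split_ifs with h0 h1
      · refine Finsupp.sum_congr fun m hm => ?_
        have hw := wlt0 p q Q1 G1 hG1 h0 hm
        rw [ih _ n' (by omega) (by omega)]
      · refine Finsupp.sum_congr fun m hm => ?_
        have hw := wlt1 p q P1 G2 hG2 h1 hm
        rw [ih _ n' (by omega) (by omega)]
      · rfl

noncomputable def nf (d : Fin 2 →₀ ℕ) : (Fin Q1 × Fin P1) →₀ R :=
  nfAux p q Q1 P1 G1 G2 (w p q d + 1) d

include hG1 hG2 in
lemma nf_X {d : Fin 2 →₀ ℕ} (h : Q1 ≤ d 0) :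
    nf p q Q1 P1 G1 G2 d
      = (AddMonoidAlgebra.coeff G1).sum fun m r => r • nf p q Q1 P1 G1 G2 (d - Finsupp.single 0 Q1 + m) := by
  rw [nf]
  simp only [nfAux, dif_pos h]
  refine Finsupp.sum_congr fun m hm => ?_
  rw [nf, nfAux_eq p q Q1 P1 G1 G2 hG1 hG2 _ _ _ (by have := wlt0 p q Q1 G1 hG1 h hm; omega)
    (Nat.lt_succ_self _)]

include hG1 hG2 in
lemma nf_Y {d : Fin 2 →₀ ℕ} (h0 : ¬ Q1 ≤ d 0) (h : P1 ≤ d 1) :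
    nf p q Q1 P1 G1 G2 d
      = (AddMonoidAlgebra.coeff G2).sum fun m r => r • nf p q Q1 P1 G1 G2 (d - Finsupp.single 1 P1 + m) := by
  rw [nf]
  simp only [nfAux, dif_neg h0, dif_pos h]
  refine Finsupp.sum_congr fun m hm => ?_
  rw [nf, nfAux_eq p q Q1 P1 G1 G2 hG1 hG2 _ _ _ (by have := wlt1 p q P1 G2 hG2 h hm; omega)
    (Nat.lt_succ_self _)]

lemma nf_base {d : Fin 2 →₀ ℕ} (h0 : ¬ Q1 ≤ d 0) (h1 : ¬ P1 ≤ d 1) :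
    nf p q Q1 P1 G1 G2 d
      = Finsupp.single (⟨d 0, lt_of_not_ge h0⟩, ⟨d 1, lt_of_not_ge h1⟩) 1 := by
  rw [nf]; simp only [nfAux, dif_neg h0, dif_neg h1]

lemma fin2_decomp (d : Fin 2 →₀ ℕ) : d = Finsupp.single 0 (d 0) + Finsupp.single 1 (d 1) := by
  ext i
  match i with
  | 0 => simp
  | 1 => simp

lemma add_single_sub_self (d : Fin 2 →₀ ℕ) (i : Fin 2) (k : ℕ) :
    d + Finsupp.single i k - Finsupp.single i k = d := by
  ext j
  simp [Finsupp.tsub_apply, Finsupp.add_apply]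

lemma swap_sub_lemma (d m : Fin 2 →₀ ℕ) (_h : Q1 ≤ d 0) :
    d + Finsupp.single 1 P1 - Finsupp.single 0 Q1 + m
      = (d - Finsupp.single 0 Q1 + m) + Finsupp.single 1 P1 := by
  ext j
  match j with
  | 0 => simp [Finsupp.tsub_apply, Finsupp.add_apply]
  | 1 => simp [Finsupp.tsub_apply, Finsupp.add_apply]; omega

lemma swap_sub_lemma' (d m' m : Fin 2 →₀ ℕ) (h : Q1 ≤ d 0) :
    d + m' - Finsupp.single 0 Q1 + m
      = (d - Finsupp.single 0 Q1 + m) + m' := by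
  ext j
  match j with
  | 0 =>
    simp [Finsupp.tsub_apply, Finsupp.add_apply]
    omega
  | 1 =>
    simp [Finsupp.tsub_apply, Finsupp.add_apply]; omega

/-- `monomial d r * f` expanded as a `Finsupp.sum`. -/
lemma monomial_mul_eq_sum (d : Fin 2 →₀ ℕ) (r : R) (f : MvPolynomial (Fin 2) R) :
    monomial d r * f = (AddMonoidAlgebra.coeff f).sum fun m c => monomial (d + m) (r * c) := by
  induction f using MvPolynomial.induction_on' with
  | monomial u a =>
    rw [monomial_mul]
    rw [show (AddMonoidAlgebra.coeff ((monomial u) a : MvPolynomial (Fin 2) R)).sum (fun m c => monomial (d + m) (r * c))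
        = monomial (d + u) (r * a) from Finsupp.sum_single_index (by simp)]
  | add f g hf hg =>
    rw [mul_add, hf, hg]
    exact (Finsupp.sum_add_index' (fun m => by simp) (fun m c1 c2 => by
      rw [mul_add, map_add])).symm

noncomputable def phi : MvPolynomial (Fin 2) R →ₗ[R] ((Fin Q1 × Fin P1) →₀ R) :=
  (basisMonomials (Fin 2) R).constr R (nf p q Q1 P1 G1 G2)

lemma phi_monomial (d : Fin 2 →₀ ℕ) (r : R) :
    phi p q Q1 P1 G1 G2 (monomial d r) = r • nf p q Q1 P1 G1 G2 d := by
  have h : (monomial d r : MvPolynomial (Fin 2) R) = r • ((basisMonomials (Fin 2) R) d) := by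
    rw [coe_basisMonomials]
    rw [smul_monomial, smul_eq_mul, mul_one]
  rw [h, map_smul]
  simp only [phi, Module.Basis.constr_basis]

lemma phi_monomial_mul (d : Fin 2 →₀ ℕ) (r : R) (f : MvPolynomial (Fin 2) R) :
    phi p q Q1 P1 G1 G2 (monomial d r * f)
      = (AddMonoidAlgebra.coeff f).sum fun m c => (r * c) • nf p q Q1 P1 G1 G2 (d + m) := by
  rw [monomial_mul_eq_sum, map_finsuppSum]
  exact Finsupp.sum_congr fun m _ => phi_monomial p q Q1 P1 G1 G2 _ _

include hG1 hG2 in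
lemma nf_shiftY : ∀ (n : ℕ) (d : Fin 2 →₀ ℕ), w p q d < n →
    nf p q Q1 P1 G1 G2 (d + Finsupp.single 1 P1)
      = (AddMonoidAlgebra.coeff G2).sum fun m c => c • nf p q Q1 P1 G1 G2 (d + m) := by
  intro n
  induction n with
  | zero => intro d h; omega
  | succ n ih =>
    intro d hd
    by_cases h0 : Q1 ≤ d 0
    · have h0' : Q1 ≤ (d + Finsupp.single 1 P1 : Fin 2 →₀ ℕ) 0 := by
        rw [Finsupp.add_apply]
        simpa using h0
      calc nf p q Q1 P1 G1 G2 (d + Finsupp.single 1 P1)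
          = (AddMonoidAlgebra.coeff G1).sum fun m'' c'' => c'' • nf p q Q1 P1 G1 G2
              (d + Finsupp.single 1 P1 - Finsupp.single 0 Q1 + m'') :=
            nf_X p q Q1 P1 G1 G2 hG1 hG2 h0'
        _ = (AddMonoidAlgebra.coeff G1).sum fun m'' c'' => (AddMonoidAlgebra.coeff G2).sum fun m' c' =>
              c'' • c' • nf p q Q1 P1 G1 G2 (d - Finsupp.single 0 Q1 + m'' + m') := by
            refine Finsupp.sum_congr fun m'' hm'' => ?_
            rw [swap_sub_lemma Q1 P1 d m'' h0,
              ih (d - Finsupp.single 0 Q1 + m'')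
                (by have := wlt0 p q Q1 G1 hG1 h0 hm''; omega),
              Finsupp.smul_sum]
        _ = (AddMonoidAlgebra.coeff G2).sum fun m' c' => (AddMonoidAlgebra.coeff G1).sum fun m'' c'' =>
              c'' • c' • nf p q Q1 P1 G1 G2 (d - Finsupp.single 0 Q1 + m'' + m') :=
            Finsupp.sum_comm _ _ _
        _ = (AddMonoidAlgebra.coeff G2).sum fun m c => c • nf p q Q1 P1 G1 G2 (d + m) := by
            refine Finsupp.sum_congr fun m' hm' => ?_
            have h0'' : Q1 ≤ (d + m' : Fin 2 →₀ ℕ) 0 := by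
              rw [Finsupp.add_apply]; exact Nat.le_add_right_of_le h0
            rw [nf_X p q Q1 P1 G1 G2 hG1 hG2 h0'', Finsupp.smul_sum]
            refine Finsupp.sum_congr fun m'' hm'' => ?_
            rw [swap_sub_lemma' Q1 d m' m'' h0]
            exact smul_comm _ _ _
    · have h0' : ¬ Q1 ≤ (d + Finsupp.single 1 P1 : Fin 2 →₀ ℕ) 0 := by
        rw [Finsupp.add_apply]
        simpa using h0
      have h1' : P1 ≤ (d + Finsupp.single 1 P1 : Fin 2 →₀ ℕ) 1 := by
        rw [Finsupp.add_apply]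
        simp
      rw [nf_Y p q Q1 P1 G1 G2 hG1 hG2 h0' h1']
      refine Finsupp.sum_congr fun m hm => ?_
      rw [add_single_sub_self]

include hG1 hG2 in
lemma phi_mul_g1 (f : MvPolynomial (Fin 2) R) :
    phi p q Q1 P1 G1 G2 (f * (monomial (Finsupp.single 0 Q1) 1 - G1)) = 0 := by
  induction f using MvPolynomial.induction_on' with
  | monomial d r =>
    rw [mul_sub, map_sub, monomial_mul, mul_one, phi_monomial, phi_monomial_mul]
    rw [nf_X p q Q1 P1 G1 G2 hG1 hG2
      (show Q1 ≤ (d + Finsupp.single 0 Q1 : Fin 2 →₀ ℕ) 0 by rw [Finsupp.add_apply]; simp),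
      Finsupp.smul_sum, sub_eq_zero]
    refine Finsupp.sum_congr fun m hm => ?_
    rw [add_single_sub_self, mul_smul]
  | add f g hf hg =>
    rw [add_mul, map_add, hf, hg, add_zero]

include hG1 hG2 in
lemma phi_mul_g2 (f : MvPolynomial (Fin 2) R) :
    phi p q Q1 P1 G1 G2 (f * (monomial (Finsupp.single 1 P1) 1 - G2)) = 0 := by
  induction f using MvPolynomial.induction_on' with
  | monomial d r =>
    rw [mul_sub, map_sub, monomial_mul, mul_one, phi_monomial, phi_monomial_mul]
    rw [nf_shiftY p q Q1 P1 G1 G2 hG1 hG2 (w p q d + 1) d (Nat.lt_succ_self _),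
      Finsupp.smul_sum, sub_eq_zero]
    refine Finsupp.sum_congr fun m hm => ?_
    rw [mul_smul]
  | add f g hf hg =>
    rw [add_mul, map_add, hf, hg, add_zero]

include hG1 hG2 in
lemma phi_ideal (f : MvPolynomial (Fin 2) R)
    (hf : f ∈ Ideal.span {monomial (Finsupp.single 0 Q1) (1:R) - G1,
      monomial (Finsupp.single 1 P1) (1:R) - G2}) :
    phi p q Q1 P1 G1 G2 f = 0 := by
  rw [Ideal.mem_span_pair] at hf
  obtain ⟨a, b, rfl⟩ := hf
  rw [map_add, phi_mul_g1 p q Q1 P1 G1 G2 hG1 hG2 a, phi_mul_g2 p q Q1 P1 G1 G2 hG1 hG2 b,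
    add_zero]

include hG1 hG2 in
theorem exists_basis :
    ∃ b : Module.Basis (Fin Q1 × Fin P1) R
      (MvPolynomial (Fin 2) R ⧸ Ideal.span {monomial (Finsupp.single 0 Q1) (1:R) - G1,
          monomial (Finsupp.single 1 P1) (1:R) - G2}),
      ∀ t : Fin Q1 × Fin P1,
        b t = Ideal.Quotient.mk (Ideal.span {monomial (Finsupp.single 0 Q1) (1:R) - G1,
          monomial (Finsupp.single 1 P1) (1:R) - G2})
          (monomial (Finsupp.single 0 (t.1:ℕ) + Finsupp.single 1 (t.2:ℕ)) 1) := by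
  set I : Ideal (MvPolynomial (Fin 2) R) :=
    Ideal.span {monomial (Finsupp.single 0 Q1) (1:R) - G1,
      monomial (Finsupp.single 1 P1) (1:R) - G2} with hI
  set v : Fin Q1 × Fin P1 → (MvPolynomial (Fin 2) R ⧸ I) := fun t =>
    Ideal.Quotient.mk I (monomial (Finsupp.single 0 (t.1:ℕ) + Finsupp.single 1 (t.2:ℕ)) 1)
    with hv
  have hg1I : monomial (Finsupp.single 0 Q1) (1:R) - G1 ∈ I :=
    Ideal.subset_span (Set.mem_insert _ _)
  have hg2I : monomial (Finsupp.single 1 P1) (1:R) - G2 ∈ I :=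
    Ideal.subset_span (Set.mem_insert_iff.mpr (Or.inr rfl))
  -- spanning, monomial by monomial, by strong induction on weight
  have hspan_mono : ∀ (n : ℕ) (d : Fin 2 →₀ ℕ) (r : R), w p q d < n →
      Ideal.Quotient.mk I (monomial d r) ∈ Submodule.span R (Set.range v) := by
    intro n
    induction n with
    | zero => intro d r h; omega
    | succ n ih =>
      intro d r hd
      by_cases h0 : Q1 ≤ d 0
      · have hdec : (d - Finsupp.single 0 Q1) + Finsupp.single 0 Q1 = d :=
          tsub_add_cancel_of_le (Finsupp.single_le_iff.mpr h0)
        have key : Ideal.Quotient.mk I (monomial d r)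
            = Ideal.Quotient.mk I (monomial (d - Finsupp.single 0 Q1) r * G1) := by
          rw [Ideal.Quotient.eq]
          have heq : monomial d r - monomial (d - Finsupp.single 0 Q1) r * G1
              = monomial (d - Finsupp.single 0 Q1) r
                * (monomial (Finsupp.single 0 Q1) (1:R) - G1) := by
            rw [mul_sub, monomial_mul, mul_one, hdec]
          rw [heq]
          exact Ideal.mul_mem_left _ _ hg1I
        rw [key, monomial_mul_eq_sum, map_finsuppSum]
        refine Submodule.sum_mem _ fun m hm => ih _ _ ?_
        have := wlt0 p q Q1 G1 hG1 h0 hm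
        omega
      · by_cases h1 : P1 ≤ d 1
        · have hdec : (d - Finsupp.single 1 P1) + Finsupp.single 1 P1 = d :=
            tsub_add_cancel_of_le (Finsupp.single_le_iff.mpr h1)
          have key : Ideal.Quotient.mk I (monomial d r)
              = Ideal.Quotient.mk I (monomial (d - Finsupp.single 1 P1) r * G2) := by
            rw [Ideal.Quotient.eq]
            have heq : monomial d r - monomial (d - Finsupp.single 1 P1) r * G2
                = monomial (d - Finsupp.single 1 P1) r
                  * (monomial (Finsupp.single 1 P1) (1:R) - G2) := by
              rw [mul_sub, monomial_mul, mul_one, hdec]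
            rw [heq]
            exact Ideal.mul_mem_left _ _ hg2I
          rw [key, monomial_mul_eq_sum, map_finsuppSum]
          refine Submodule.sum_mem _ fun m hm => ih _ _ ?_
          have := wlt1 p q P1 G2 hG2 h1 hm
          omega
        · set t : Fin Q1 × Fin P1 := (⟨d 0, lt_of_not_ge h0⟩, ⟨d 1, lt_of_not_ge h1⟩) with ht
          have hmon : monomial d r
              = r • monomial (Finsupp.single 0 ((t.1:ℕ)) + Finsupp.single 1 ((t.2:ℕ))) (1:R) := by
            rw [smul_monomial, smul_eq_mul, mul_one]
            exact congrArg (fun e => (monomial e r : MvPolynomial (Fin 2) R)) (fin2_decomp d)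
          have : Ideal.Quotient.mk I (monomial d r) = r • v t := by
            rw [hmon, hv]
            rw [← Ideal.Quotient.mkₐ_eq_mk R I, map_smul]
          rw [this]
          exact Submodule.smul_mem _ r (Submodule.subset_span ⟨t, rfl⟩)
  have hspan : ⊤ ≤ Submodule.span R (Set.range v) := by
    rintro x -
    obtain ⟨f, rfl⟩ := Ideal.Quotient.mk_surjective x
    induction f using MvPolynomial.induction_on' with
    | monomial d r => exact hspan_mono (w p q d + 1) d r (Nat.lt_succ_self _)
    | add f g hf hg => rw [map_add]; exact Submodule.add_mem _ hf hg
  -- phi of basis monomials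
  have hphiv : ∀ t : Fin Q1 × Fin P1, ∀ r : R,
      phi p q Q1 P1 G1 G2
        (monomial (Finsupp.single 0 ((t.1:ℕ)) + Finsupp.single 1 ((t.2:ℕ))) r)
      = Finsupp.single t r := by
    intro t r
    rw [phi_monomial]
    have h0 : ¬ Q1 ≤ (Finsupp.single 0 ((t.1:ℕ)) + Finsupp.single 1 ((t.2:ℕ))
        : Fin 2 →₀ ℕ) 0 := by
      rw [Finsupp.add_apply]
      simpa using t.1.isLt
    have h1 : ¬ P1 ≤ (Finsupp.single 0 ((t.1:ℕ)) + Finsupp.single 1 ((t.2:ℕ))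
        : Fin 2 →₀ ℕ) 1 := by
      rw [Finsupp.add_apply]
      simpa using t.2.isLt
    rw [nf_base p q Q1 P1 G1 G2 h0 h1]
    rw [Finsupp.smul_single, smul_eq_mul, mul_one]
    congr 1
    refine Prod.ext (Fin.ext ?_) (Fin.ext ?_) <;> simp
  -- linear independence
  have hli : LinearIndependent R v := by
    rw [linearIndependent_iff'']
    intro s g hg0 hsum i
    by_cases hi : i ∈ s
    · set u : MvPolynomial (Fin 2) R :=
        ∑ j ∈ s, monomial (Finsupp.single 0 ((j.1:ℕ)) + Finsupp.single 1 ((j.2:ℕ))) (g j)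
        with hu
      have hmk : Ideal.Quotient.mk I u = 0 := by
        rw [hu, map_sum, ← hsum]
        refine Finset.sum_congr rfl fun j hj => ?_
        have : (monomial (Finsupp.single 0 ((j.1:ℕ)) + Finsupp.single 1 ((j.2:ℕ))) (g j)
            : MvPolynomial (Fin 2) R)
            = g j • monomial (Finsupp.single 0 ((j.1:ℕ)) + Finsupp.single 1 ((j.2:ℕ))) 1 := by
          rw [smul_monomial, smul_eq_mul, mul_one]
        rw [this, ← Ideal.Quotient.mkₐ_eq_mk R I, map_smul, Ideal.Quotient.mkₐ_eq_mk]
      have huI : u ∈ I := Ideal.Quotient.eq_zero_iff_mem.mp hmk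
      have hphi0 : phi p q Q1 P1 G1 G2 u = 0 :=
        phi_ideal p q Q1 P1 G1 G2 hG1 hG2 u (hI ▸ huI)
      have hphiu : phi p q Q1 P1 G1 G2 u = ∑ j ∈ s, Finsupp.single j (g j) := by
        rw [hu, map_sum]
        exact Finset.sum_congr rfl fun j _ => hphiv j (g j)
      have := congrArg (fun F => F i) (hphiu.symm.trans hphi0)
      simp only [Finsupp.finset_sum_apply, Finsupp.coe_zero, Pi.zero_apply] at this
      rw [Finset.sum_eq_single_of_mem i hi (fun j _ hji => by
        rw [Finsupp.single_apply, if_neg hji])] at this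
      rwa [Finsupp.single_apply, if_pos rfl] at this
    · exact hg0 i hi
  exact ⟨Module.Basis.mk hli hspan, fun t => by rw [Module.Basis.mk_apply]⟩

end Weier

namespace WeierApp

variable (K : Type) [Field K] [CharZero K] (p q : ℕ)

noncomputable def GG1 : genRing K p q :=
  ∑ i : idxSet p q,
    monomial (Finsupp.single 0 ((i : ℕ × ℕ).1 - 1) + Finsupp.single 1 (i : ℕ × ℕ).2)
      (MvPolynomial.C ((q:K)⁻¹) * (((i : ℕ × ℕ).1 : coefRing K p q)) * MvPolynomial.X i)

noncomputable def GG2 : genRing K p q :=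
  ∑ i : idxSet p q,
    monomial (Finsupp.single 0 (i : ℕ × ℕ).1 + Finsupp.single 1 ((i : ℕ × ℕ).2 - 1))
      (-(MvPolynomial.C ((p:K)⁻¹) * (((i : ℕ × ℕ).2 : coefRing K p q)) * MvPolynomial.X i))

lemma genF_eq : genF K p q
    = monomial (Finsupp.single 1 p) (1 : coefRing K p q)
      - monomial (Finsupp.single 0 q) 1
      + ∑ i : idxSet p q,
          monomial (Finsupp.single 0 (i : ℕ × ℕ).1 + Finsupp.single 1 (i : ℕ × ℕ).2)
            (MvPolynomial.X i) := by
  rw [genF]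
  congr 1
  · rw [X_pow_eq_monomial, X_pow_eq_monomial]
  · refine Finset.sum_congr rfl fun i _ => ?_
    simp [X_pow_eq_monomial, monomial_mul, C_mul_monomial]

lemma index_sub0 (ν μ : ℕ) :
    (Finsupp.single (0 : Fin 2) ν + Finsupp.single 1 μ) - Finsupp.single 0 1
      = Finsupp.single (0 : Fin 2) (ν - 1) + Finsupp.single 1 μ := by
  ext j
  match j with
  | 0 => simp [Finsupp.tsub_apply, Finsupp.add_apply]
  | 1 => simp [Finsupp.tsub_apply, Finsupp.add_apply]

lemma index_sub1 (ν μ : ℕ) :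
    (Finsupp.single (0 : Fin 2) ν + Finsupp.single 1 μ) - Finsupp.single 1 1
      = Finsupp.single (0 : Fin 2) ν + Finsupp.single 1 (μ - 1) := by
  ext j
  match j with
  | 0 => simp [Finsupp.tsub_apply, Finsupp.add_apply]
  | 1 => simp [Finsupp.tsub_apply, Finsupp.add_apply]

lemma pd0_eq : pderiv 0 (genF K p q)
    = monomial (Finsupp.single 0 (q-1)) (-(q : coefRing K p q))
      + ∑ i : idxSet p q,
          monomial (Finsupp.single 0 ((i : ℕ × ℕ).1 - 1) + Finsupp.single 1 (i : ℕ × ℕ).2)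
            ((((i : ℕ × ℕ).1 : coefRing K p q)) * MvPolynomial.X i) := by
  rw [genF_eq, map_add, map_sub, map_sum]
  congr 1
  · rw [pderiv_monomial, pderiv_monomial]
    rw [show ((Finsupp.single (1:Fin 2) p) : Fin 2 →₀ ℕ) 0 = 0 by simp]
    rw [show ((Finsupp.single (0:Fin 2) q) : Fin 2 →₀ ℕ) 0 = q by simp]
    rw [← Finsupp.single_tsub]
    simp
  · refine Finset.sum_congr rfl fun i _ => ?_
    rw [pderiv_monomial, index_sub0]
    congr 1
    rw [show ((Finsupp.single (0:Fin 2) (i : ℕ × ℕ).1 + Finsupp.single 1 (i : ℕ × ℕ).2)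
        : Fin 2 →₀ ℕ) 0 = (i : ℕ × ℕ).1 by simp]
    ring

lemma pd1_eq : pderiv 1 (genF K p q)
    = monomial (Finsupp.single 1 (p-1)) ((p : coefRing K p q))
      + ∑ i : idxSet p q,
          monomial (Finsupp.single 0 (i : ℕ × ℕ).1 + Finsupp.single 1 ((i : ℕ × ℕ).2 - 1))
            ((((i : ℕ × ℕ).2 : coefRing K p q)) * MvPolynomial.X i) := by
  rw [genF_eq, map_add, map_sub, map_sum]
  congr 1
  · rw [pderiv_monomial, pderiv_monomial]
    rw [show ((Finsupp.single (1:Fin 2) p) : Fin 2 →₀ ℕ) 1 = p by simp]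
    rw [show ((Finsupp.single (0:Fin 2) q) : Fin 2 →₀ ℕ) 1 = 0 by simp]
    rw [← Finsupp.single_tsub]
    simp
  · refine Finset.sum_congr rfl fun i _ => ?_
    rw [pderiv_monomial, index_sub1]
    congr 1
    rw [show ((Finsupp.single (0:Fin 2) (i : ℕ × ℕ).1 + Finsupp.single 1 (i : ℕ × ℕ).2)
        : Fin 2 →₀ ℕ) 1 = (i : ℕ × ℕ).2 by simp]
    ring

variable {p q}

lemma g1_eq (hq : 0 < q) :
    monomial (Finsupp.single 0 (q-1)) (1 : coefRing K p q) - GG1 K p q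
      = C (MvPolynomial.C (-(q:K)⁻¹)) * pderiv 0 (genF K p q) := by
  have hq0 : (q:K) ≠ 0 := Nat.cast_ne_zero.mpr (by omega)
  rw [pd0_eq, mul_add, Finset.mul_sum, sub_eq_add_neg]
  congr 1
  · rw [C_mul_monomial]
    congr 1
    rw [show ((q : coefRing K p q)) = MvPolynomial.C ((q:K)) from
      (map_natCast (MvPolynomial.C : K →+* coefRing K p q) q).symm]
    rw [← map_neg, ← map_mul]
    rw [show (-(q:K)⁻¹ * -(q:K)) = 1 by field_simp]
    exact (map_one _).symm
  · rw [GG1, ← Finset.sum_neg_distrib]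
    refine Finset.sum_congr rfl fun i _ => ?_
    rw [C_mul_monomial, ← map_neg (monomial _)]
    congr 1
    rw [map_neg]
    ring

lemma g2_eq (hp : 0 < p) :
    monomial (Finsupp.single 1 (p-1)) (1 : coefRing K p q) - GG2 K p q
      = C (MvPolynomial.C ((p:K)⁻¹)) * pderiv 1 (genF K p q) := by
  have hp0 : (p:K) ≠ 0 := Nat.cast_ne_zero.mpr (by omega)
  rw [pd1_eq, mul_add, Finset.mul_sum, sub_eq_add_neg]
  congr 1
  · rw [C_mul_monomial]
    congr 1
    rw [show ((p : coefRing K p q)) = MvPolynomial.C ((p:K)) from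
      (map_natCast (MvPolynomial.C : K →+* coefRing K p q) p).symm]
    rw [← map_mul]
    rw [show ((p:K)⁻¹ * (p:K)) = 1 by field_simp]
    exact (map_one _).symm
  · rw [GG2, ← Finset.sum_neg_distrib]
    refine Finset.sum_congr rfl fun i _ => ?_
    rw [C_mul_monomial, ← map_neg (monomial _), neg_neg]
    congr 1
    ring

lemma mem_idx {i : ℕ × ℕ} (hi : i ∈ idxSet p q) :
    i.1 < q ∧ i.2 < p ∧ i.1 * p + i.2 * q < p * q := by
  rw [idxSet, Finset.mem_filter, Finset.mem_product, Finset.mem_range, Finset.mem_range] at hi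
  exact ⟨hi.1.1, hi.1.2, hi.2⟩

lemma hGG1 : ∀ m ∈ (GG1 K p q).support, p * m 0 + q * m 1 < p * (q-1) := by
  classical
  intro m hm
  rw [GG1] at hm
  have h := MvPolynomial.support_sum hm
  rw [Finset.mem_biUnion] at h
  obtain ⟨i, -, hmi⟩ := h
  rw [MvPolynomial.support_monomial] at hmi
  by_cases hc : (MvPolynomial.C ((q:K)⁻¹) * (((i : ℕ × ℕ).1 : coefRing K p q))
      * MvPolynomial.X i) = 0
  · rw [if_pos hc] at hmi
    exact absurd hmi (Finset.notMem_empty m)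
  · rw [if_neg hc] at hmi
    rw [Finset.mem_singleton] at hmi
    subst hmi
    have hν : (i : ℕ × ℕ).1 ≠ 0 := by
      intro h0
      apply hc
      rw [h0]
      simp
    obtain ⟨hν1, hμ1, hw⟩ := mem_idx i.2
    rw [show ((Finsupp.single (0:Fin 2) ((i : ℕ × ℕ).1 - 1) + Finsupp.single 1 (i : ℕ × ℕ).2)
        : Fin 2 →₀ ℕ) 0 = (i : ℕ × ℕ).1 - 1 by simp,
      show ((Finsupp.single (0:Fin 2) ((i : ℕ × ℕ).1 - 1) + Finsupp.single 1 (i : ℕ × ℕ).2)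
        : Fin 2 →₀ ℕ) 1 = (i : ℕ × ℕ).2 by simp]
    have e1 : p * ((i : ℕ × ℕ).1 - 1) = (i : ℕ × ℕ).1 * p - p := by
      rw [Nat.mul_sub, mul_one, mul_comm]
    have e2 : p * (q - 1) = p * q - p := by rw [Nat.mul_sub, mul_one]
    have e3 : q * (i : ℕ × ℕ).2 = (i : ℕ × ℕ).2 * q := mul_comm _ _
    have e4 : p ≤ (i : ℕ × ℕ).1 * p := Nat.le_mul_of_pos_left p (by omega)
    omega

lemma hGG2 : ∀ m ∈ (GG2 K p q).support, p * m 0 + q * m 1 < q * (p-1) := by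
  classical
  intro m hm
  rw [GG2] at hm
  have h := MvPolynomial.support_sum hm
  rw [Finset.mem_biUnion] at h
  obtain ⟨i, -, hmi⟩ := h
  rw [MvPolynomial.support_monomial] at hmi
  by_cases hc : (-(MvPolynomial.C ((p:K)⁻¹) * (((i : ℕ × ℕ).2 : coefRing K p q))
      * MvPolynomial.X i)) = 0
  · rw [if_pos hc] at hmi
    exact absurd hmi (Finset.notMem_empty m)
  · rw [if_neg hc] at hmi
    rw [Finset.mem_singleton] at hmi
    subst hmi
    have hμ : (i : ℕ × ℕ).2 ≠ 0 := by
      intro h0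
      apply hc
      rw [h0]
      simp
    obtain ⟨hν1, hμ1, hw⟩ := mem_idx i.2
    rw [show ((Finsupp.single (0:Fin 2) (i : ℕ × ℕ).1 + Finsupp.single 1 ((i : ℕ × ℕ).2 - 1))
        : Fin 2 →₀ ℕ) 0 = (i : ℕ × ℕ).1 by simp,
      show ((Finsupp.single (0:Fin 2) (i : ℕ × ℕ).1 + Finsupp.single 1 ((i : ℕ × ℕ).2 - 1))
        : Fin 2 →₀ ℕ) 1 = (i : ℕ × ℕ).2 - 1 by simp]
    have e1 : q * ((i : ℕ × ℕ).2 - 1) = (i : ℕ × ℕ).2 * q - q := by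
      rw [Nat.mul_sub, mul_one, mul_comm]
    have e2 : q * (p - 1) = q * p - q := by rw [Nat.mul_sub, mul_one]
    have e2' : q * p = p * q := mul_comm _ _
    have e3 : p * (i : ℕ × ℕ).1 = (i : ℕ × ℕ).1 * p := mul_comm _ _
    have e4 : q ≤ (i : ℕ × ℕ).2 * q := Nat.le_mul_of_pos_left q (by omega)
    omega

lemma pd0_mem (hq : 0 < q) : pderiv 0 (genF K p q)
    = C (MvPolynomial.C (-(q:K))) *
      (monomial (Finsupp.single 0 (q-1)) (1 : coefRing K p q) - GG1 K p q) := by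
  have hq0 : (q:K) ≠ 0 := Nat.cast_ne_zero.mpr (by omega)
  rw [g1_eq K hq, ← mul_assoc, ← map_mul, ← map_mul]
  rw [show (-(q:K) * -(q:K)⁻¹) = 1 by
    field_simp]
  rw [map_one, map_one, one_mul]

lemma pd1_mem (hp : 0 < p) : pderiv 1 (genF K p q)
    = C (MvPolynomial.C ((p:K))) *
      (monomial (Finsupp.single 1 (p-1)) (1 : coefRing K p q) - GG2 K p q) := by
  have hp0 : (p:K) ≠ 0 := Nat.cast_ne_zero.mpr (by omega)
  rw [g2_eq K hp, ← mul_assoc, ← map_mul, ← map_mul]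
  rw [show ((p:K) * (p:K)⁻¹) = 1 by
    field_simp]
  rw [map_one, map_one, one_mul]

lemma span_eq (hp : 0 < p) (hq : 0 < q) :
    Ideal.span {pderiv 0 (genF K p q), pderiv 1 (genF K p q)}
      = Ideal.span {monomial (Finsupp.single 0 (q-1)) (1 : coefRing K p q) - GG1 K p q,
          monomial (Finsupp.single 1 (p-1)) (1 : coefRing K p q) - GG2 K p q} := by
  apply le_antisymm
  · rw [Ideal.span_le]
    rintro x hx
    simp only [Set.mem_insert_iff, Set.mem_singleton_iff] at hx
    rcases hx with rfl | rfl
    · rw [pd0_mem K hq]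
      exact Ideal.mul_mem_left _ _ (Ideal.subset_span (Set.mem_insert _ _))
    · rw [pd1_mem K hp]
      exact Ideal.mul_mem_left _ _
        (Ideal.subset_span (Set.mem_insert_iff.mpr (Or.inr rfl)))
  · rw [Ideal.span_le]
    rintro x hx
    simp only [Set.mem_insert_iff, Set.mem_singleton_iff] at hx
    rcases hx with rfl | rfl
    · rw [g1_eq K hq]
      exact Ideal.mul_mem_left _ _ (Ideal.subset_span (Set.mem_insert _ _))
    · rw [g2_eq K hp]
      exact Ideal.mul_mem_left _ _
        (Ideal.subset_span (Set.mem_insert_iff.mpr (Or.inr rfl)))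

end WeierApp


/-- `N = R[X,Y]/(F_X, F_Y)` is a free `R`-module with basis the residue classes of the
monomials `X^ν Y^μ`, `0 ≤ ν < q−1`, `0 ≤ μ < p−1`; in particular it is free of rank
`(p−1)(q−1)`. -/
theorem quotient_by_partials_free_basis (K : Type) [Field K] [IsAlgClosed K] [CharZero K]
    (p q : ℕ) (hp : 1 < p) (hpq : p < q) (hco : Nat.Coprime p q) :
    ∃ b : Module.Basis (Fin (q - 1) × Fin (p - 1)) (coefRing K p q)
        (genRing K p q ⧸ Ideal.span {pderiv 0 (genF K p q), pderiv 1 (genF K p q)}),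
      ∀ i : Fin (q - 1) × Fin (p - 1),
        b i = Ideal.Quotient.mk (Ideal.span {pderiv 0 (genF K p q), pderiv 1 (genF K p q)})
          (X 0 ^ (i.1 : ℕ) * X 1 ^ (i.2 : ℕ)) := by
  have hq0 : 0 < q := by omega
  have hp0 : 0 < p := by omega
  rw [WeierApp.span_eq K hp0 hq0]
  obtain ⟨b, hb⟩ := Weier.exists_basis p q (q-1) (p-1) (WeierApp.GG1 K p q)
    (WeierApp.GG2 K p q)
    (fun m hm => by simpa [Weier.w] using WeierApp.hGG1 K (p:=p) (q:=q) m hm)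
    (fun m hm => by simpa [Weier.w] using WeierApp.hGG2 K (p:=p) (q:=q) m hm)
  refine ⟨b, fun t => ?_⟩
  rw [hb t]
  congr 1
  rw [X_pow_eq_monomial, X_pow_eq_monomial, monomial_mul, one_mul]
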